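/- arXiv:2402.16442 — 5 statements merged into one kernel-verified Lean document; each statement's English description precedes it below -/
import Mathlib

section
/- Let S' ⊆ V be a current partial subset, R ⊆ V a set of remaining candidate points with S' ∩ R = ∅, and let k be an integer with 1 ≤ k ≤ |R|. If v ∈ R satisfies U_min(v) > U_max^k (the k-th largest maximum utility over R), then v belongs to every optimal set S*, i.e., every set S* maximizing f over all T with S' ⊆ T ⊆ S' ∪ R and |T| = |S'| + k contains v. -/
/-!
If `v` were missing from an optimal `S*`, the `k` points of `S* \ S'` lie in `R`, so one of them,
`w`, has `U_max w ≤ U_max^k < U_min v`. Over `B = S* \ {w}` the marginal gain of `v` is at least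
`α U_min v` and that of `w` is at most `α U_max w`, so swapping `w` for `v` strictly increases `f`,
contradicting optimality.
-/

open Finset

/-- The `k`-th largest element (1-indexed) of a multiset of reals. -/
noncomputable def kthLargest (m : Multiset ℝ) (k : ℕ) : ℝ :=
  (m.sort (· ≤ ·)).getD (Multiset.card m - k) 0

theorem le_kthLargest_of_mem_take {m : Multiset ℝ} {k : ℕ} (hk1 : 1 ≤ k)
    (hk2 : k ≤ Multiset.card m) {x : ℝ}
    (hx : x ∈ (m.sort (· ≤ ·)).take (Multiset.card m - k + 1)) :
    x ≤ kthLargest m k := by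
  have hlen : (m.sort (· ≤ ·)).length = Multiset.card m := Multiset.length_sort _
  obtain ⟨i, hi, rfl⟩ := List.mem_iff_getElem.mp hx
  rw [List.length_take] at hi
  rw [List.getElem_take, kthLargest, List.getD_eq_getElem _ _ (by omega)]
  exact (Multiset.pairwise_sort _ _).rel_get_of_le (a := ⟨i, by omega⟩) (b := ⟨_, by omega⟩)
    (by simp only [Fin.mk_le_mk]; omega)

theorem countP_kthLargest_lt_lt (m : Multiset ℝ) {k : ℕ} (hk1 : 1 ≤ k)
    (hk2 : k ≤ Multiset.card m) :
    m.countP (kthLargest m k < ·) < k := by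
  set L := m.sort (· ≤ ·)
  set j := Multiset.card m - k + 1
  have hlen : L.length = Multiset.card m := Multiset.length_sort _
  have htake : (L.take j).countP (kthLargest m k < ·) = 0 :=
    List.countP_eq_zero.mpr fun x hx => by
      simpa using le_kthLargest_of_mem_take hk1 hk2 hx
  have hdrop := List.countP_le_length (p := (kthLargest m k < ·)) (l := L.drop j)
  have hsplit : m.countP (kthLargest m k < ·) = (L.drop j).countP (kthLargest m k < ·) :=
    calc m.countP (kthLargest m k < ·)
        = (L : Multiset ℝ).countP (kthLargest m k < ·) := by rw [Multiset.sort_eq]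
      _ = (L.take j).countP (kthLargest m k < ·) + (L.drop j).countP (kthLargest m k < ·) := by
        rw [Multiset.coe_countP, ← List.countP_append, List.take_append_drop]
      _ = (L.drop j).countP (kthLargest m k < ·) := by rw [htake, zero_add]
  simp only [List.length_drop] at hdrop
  omega

theorem exists_mem_le_kthLargest {m sub : Multiset ℝ} {k : ℕ} (hk1 : 1 ≤ k) (hsub : sub ≤ m)
    (hcard : Multiset.card sub = k) :
    ∃ x ∈ sub, x ≤ kthLargest m k := by
  by_contra! h
  have hall : sub.countP (kthLargest m k < ·) = k := (Multiset.countP_eq_card.mpr h).trans hcard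
  have := Multiset.countP_le_of_le (kthLargest m k < ·) hsub
  have := countP_kthLargest_lt_lt m hk1 (hcard ▸ Multiset.card_le_card hsub)
  omega

theorem Finset.exists_mem_le_kthLargest_map {ι : Type*} {D R : Finset ι} (g : ι → ℝ) {k : ℕ}
    (hk1 : 1 ≤ k) (hDR : D ⊆ R) (hcard : D.card = k) :
    ∃ w ∈ D, g w ≤ kthLargest (R.val.map g) k := by
  obtain ⟨x, hx, hxle⟩ := exists_mem_le_kthLargest (m := R.val.map g) (sub := D.val.map g) hk1
    (Multiset.map_le_map (val_le_iff.mpr hDR)) (by simpa using hcard)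
  obtain ⟨w, hw, rfl⟩ := Multiset.mem_map.mp hx
  exact ⟨w, hw, hxle⟩

section PairObjective

variable {V : Type*} [DecidableEq V] (α β : ℝ) (u : V → ℝ) (s : V → V → ℝ)

noncomputable def pairObjective (S : Finset V) : ℝ :=
  α * ∑ v ∈ S, u v - (β / 2) * ∑ v ∈ S, ∑ w ∈ S, s v w

variable {α β u s}

theorem pairObjective_insert (hsymm : ∀ v w, s v w = s w v) (hdiag : ∀ v, s v v = 0)
    {B : Finset V} {x : V} (hx : x ∉ B) :
    pairObjective α β u s (insert x B) =
      pairObjective α β u s B + (α * u x - β * ∑ y ∈ B, s x y) := by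
  have hcol : ∑ y ∈ B, s y x = ∑ y ∈ B, s x y := sum_congr rfl fun y _ => hsymm y x
  simp only [pairObjective, sum_insert hx, hdiag, zero_add, sum_add_distrib, hcol]
  ring

theorem pairObjective_insert_lt_insert (hβ : 0 ≤ β) (hsymm : ∀ v w, s v w = s w v)
    (hnn : ∀ v w, 0 ≤ s v w) (hdiag : ∀ v, s v v = 0) {A B C : Finset V} {v w : V}
    (hAB : A ⊆ B) (hBC : B ⊆ C) (hv : v ∉ B) (hw : w ∉ B)
    (h : α * u w - β * ∑ y ∈ A, s w y < α * u v - β * ∑ y ∈ C, s v y) :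
    pairObjective α β u s (insert w B) < pairObjective α β u s (insert v B) := by
  rw [pairObjective_insert hsymm hdiag hv, pairObjective_insert hsymm hdiag hw]
  have hA : ∑ y ∈ A, s w y ≤ ∑ y ∈ B, s w y :=
    sum_le_sum_of_subset_of_nonneg hAB fun y _ _ => hnn w y
  have hC : ∑ y ∈ B, s v y ≤ ∑ y ∈ C, s v y :=
    sum_le_sum_of_subset_of_nonneg hBC fun y _ _ => hnn v y
  linarith [mul_le_mul_of_nonneg_left hA hβ, mul_le_mul_of_nonneg_left hC hβ]

end PairObjective

theorem grow_lemma_general {V : Type*} [DecidableEq V]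
    (α β : ℝ) (hα : 0 < α) (hβ : 0 ≤ β)
    (u : V → ℝ) (s : V → V → ℝ)
    (hsymm : ∀ v w, s v w = s w v) (hnn : ∀ v w, 0 ≤ s v w)
    (hdiag : ∀ v, s v v = 0)
    (f : Finset V → ℝ)
    (hf : ∀ S : Finset V, f S = α * ∑ v ∈ S, u v - (β / 2) * ∑ v ∈ S, ∑ w ∈ S, s v w)
    (S' R : Finset V)
    (k : ℕ) (hk1 : 1 ≤ k)
    (Umin Umax : V → ℝ)
    (hUmin : ∀ v, Umin v = u v - (β / α) * ∑ w ∈ S' ∪ R, s v w)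
    (hUmax : ∀ v, Umax v = u v - (β / α) * ∑ w ∈ S', s v w)
    (v : V) (hv : v ∈ R)
    (hgrow : Umin v > kthLargest (R.val.map Umax) k) :
    ∀ Sstar : Finset V,
      S' ⊆ Sstar → Sstar ⊆ S' ∪ R → Sstar.card = S'.card + k →
      (∀ T : Finset V, S' ⊆ T → T ⊆ S' ∪ R → T.card = S'.card + k → f T ≤ f Sstar) →
      v ∈ Sstar := by
  intro Sstar hS'S hSsub hcard hopt
  by_contra hvS
  obtain rfl : f = pairObjective α β u s := funext hf
  obtain ⟨w, hwD, hwle⟩ := (Sstar \ S').exists_mem_le_kthLargest_map Umax hk1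
    (sdiff_le_iff.mpr hSsub) (by rw [card_sdiff_of_subset hS'S]; omega)
  obtain ⟨hwS, hwS'⟩ := mem_sdiff.mp hwD
  set B := Sstar.erase w
  have hS'B : S' ⊆ B := fun y hy => mem_erase.mpr ⟨ne_of_mem_of_not_mem hy hwS', hS'S hy⟩
  have hBsub : B ⊆ S' ∪ R := (erase_subset w Sstar).trans hSsub
  have hvB : v ∉ B := fun h => hvS (mem_of_mem_erase h)
  have hgain : α * u w - β * ∑ y ∈ S', s w y < α * u v - β * ∑ y ∈ S' ∪ R, s v y := by
    have key : α * Umax w < α * Umin v := mul_lt_mul_of_pos_left (hwle.trans_lt hgrow) hα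
    rwa [hUmin, hUmax, mul_sub, mul_sub, ← mul_assoc, ← mul_assoc, mul_div_cancel₀ _ hα.ne'] at key
  have hswap := pairObjective_insert_lt_insert hβ hsymm hnn hdiag hS'B hBsub hvB
    (notMem_erase w Sstar) hgain
  rw [insert_erase hwS] at hswap
  have hopt_v := hopt (insert v B) (hS'B.trans (subset_insert v B))
    (insert_subset (mem_union_right S' hv) hBsub)
    (by rw [card_insert_of_notMem hvB, card_erase_of_mem hwS]; omega)
  exact hopt_v.not_gt hswap

/-- Grow step correctness: if the minimum utility of `v ∈ R` exceeds the `k`-th largest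
maximum utility over `R`, then `v` belongs to every optimal set. -/
theorem grow_lemma {V : Type*} [Fintype V] [DecidableEq V]
    (α β : ℝ) (hα : 0 < α) (hβ : 0 ≤ β)
    (u : V → ℝ) (s : V → V → ℝ)
    (hsymm : ∀ v w, s v w = s w v) (hnn : ∀ v w, 0 ≤ s v w)
    (hdiag : ∀ v, s v v = 0)
    (f : Finset V → ℝ)
    (hf : ∀ S : Finset V, f S = α * ∑ v ∈ S, u v - (β / 2) * ∑ v ∈ S, ∑ w ∈ S, s v w)
    (S' R : Finset V) (hdisj : Disjoint S' R)
    (k : ℕ) (hk1 : 1 ≤ k) (hk2 : k ≤ R.card)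
    (Umin Umax : V → ℝ)
    (hUmin : ∀ v, Umin v = u v - (β / α) * ∑ w ∈ S' ∪ R, s v w)
    (hUmax : ∀ v, Umax v = u v - (β / α) * ∑ w ∈ S', s v w)
    (v : V) (hv : v ∈ R)
    (hgrow : Umin v > kthLargest (R.val.map Umax) k) :
    ∀ Sstar : Finset V,
      S' ⊆ Sstar → Sstar ⊆ S' ∪ R → Sstar.card = S'.card + k →
      (∀ T : Finset V, S' ⊆ T → T ⊆ S' ∪ R → T.card = S'.card + k → f T ≤ f Sstar) →
      v ∈ Sstar :=
  grow_lemma_general α β hα hβ u s hsymm hnn hdiag f hf S' R k hk1 Umin Umax hUmin hUmax v hv hgrow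
end

section
/- Let S' ⊆ V be a current partial subset, R ⊆ V a set of remaining candidate points with S' ∩ R = ∅, and let k be an integer with 1 ≤ k ≤ |R|. If v ∈ R satisfies U_max(v) < U_min^k (the k-th largest minimum utility over R), then v belongs to no optimal set S*, i.e., no set S* maximizing f over all T with S' ⊆ T ⊆ S' ∪ R and |T| = |S'| + k contains v. -/
open Finset

/-! If `v ∈ S*`, then `S* \ S'` consists of `k` points of `R`, one of them `v`, while at least `k`
points of `R` have `U_min ≥ U_min^k > U_max(v) ≥ U_min(v)`; so one of these, `w`, lies outside `S*`.
Swapping `v` for `w` strictly increases `f`, because the marginal gain of adding `x ∉ A` to `A`, for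
`S' ⊆ A` and `insert x A ⊆ S' ∪ R`, lies between `α · U_min(x)` and `α · U_max(x)`. -/

theorem le_countP_kthLargest (m : Multiset ℝ) {k : ℕ} (hk : k ≤ Multiset.card m) :
    k ≤ m.countP (kthLargest m k ≤ ·) := by
  rcases Nat.eq_zero_or_pos k with rfl | hk0
  · exact Nat.zero_le _
  set l := m.sort (· ≤ ·)
  have hi : Multiset.card m - k < l.length := by rw [Multiset.length_sort]; omega
  have hK : kthLargest m k = l[Multiset.card m - k] := List.getD_eq_getElem _ _ hi
  have hdrop := List.drop_eq_getElem_cons hi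
  have hsorted : (l.drop (Multiset.card m - k)).Pairwise (· ≤ ·) := (m.pairwise_sort _).drop
  have hge : ∀ x ∈ l.drop (Multiset.card m - k), kthLargest m k ≤ x := by
    rw [hdrop, List.pairwise_cons] at hsorted
    rw [hdrop, hK]
    rintro x (_ | ⟨_, hx⟩)
    exacts [le_rfl, hsorted.1 x hx]
  calc k = (l.drop (Multiset.card m - k)).length := by
          rw [List.length_drop, Multiset.length_sort]; omega
    _ = (l.drop (Multiset.card m - k)).countP (kthLargest m k ≤ ·) :=
          (List.countP_eq_length.2 (by simpa using hge)).symm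
    _ ≤ l.countP (kthLargest m k ≤ ·) := (List.drop_sublist _ _).countP_le
    _ = m.countP (kthLargest m k ≤ ·) := by
          rw [← Multiset.coe_countP, Multiset.sort_eq]

theorem le_card_filter_kthLargest {V : Type*} (R : Finset V) (g : V → ℝ) {k : ℕ}
    (hk : k ≤ #R) : k ≤ #{w ∈ R | kthLargest (R.val.map g) k ≤ g w} := by
  simpa [Multiset.countP_map, card_def] using le_countP_kthLargest (R.val.map g) (by simpa)

theorem Finset.exists_mem_notMem_of_card_sdiff_le {α : Type*} [DecidableEq α]
    {S T W : Finset α} {v : α} (hWT : Disjoint W T) (hv : v ∈ S \ T) (hvW : v ∉ W)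
    (hcard : #(S \ T) ≤ #W) : ∃ w ∈ W, w ∉ S := by
  obtain ⟨w, hw, hwST⟩ := exists_mem_notMem_of_card_lt_card (s := S \ T) (t := insert v W)
    (by rw [card_insert_of_notMem hvW]; omega)
  obtain rfl | hwW := mem_insert.1 hw
  · exact absurd hv hwST
  · exact ⟨w, hwW, fun hwS => hwST (mem_sdiff.2 ⟨hwS, disjoint_left.1 hWT hwW⟩)⟩

section PairwiseObjective

variable {V : Type*} [DecidableEq V] (α β : ℝ) (u : V → ℝ) (s : V → V → ℝ)

noncomputable def pairwiseObjective (S : Finset V) : ℝ :=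
  α * ∑ v ∈ S, u v - (β / 2) * ∑ v ∈ S, ∑ w ∈ S, s v w

variable {α β u s}

theorem pairwiseObjective_insert (hsymm : ∀ v w, s v w = s w v) {A : Finset V} {x : V}
    (hx : x ∉ A) :
    pairwiseObjective α β u s (insert x A) =
      pairwiseObjective α β u s A + α * u x - β * ∑ y ∈ A, s x y - β / 2 * s x x := by
  have hcol : ∑ a ∈ A, s a x = ∑ y ∈ A, s x y := sum_congr rfl fun a _ => hsymm a x
  simp only [pairwiseObjective, sum_insert hx, sum_add_distrib, hcol]
  ring

theorem pairwiseObjective_insert_le (hsymm : ∀ v w, s v w = s w v) (hnn : ∀ v w, 0 ≤ s v w)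
    (hβ : 0 ≤ β) {A B : Finset V} {x : V} (hBA : B ⊆ A) (hx : x ∉ A) :
    pairwiseObjective α β u s (insert x A) ≤
      pairwiseObjective α β u s A + (α * u x - β * ∑ y ∈ B, s x y) := by
  have hsum : ∑ y ∈ B, s x y ≤ ∑ y ∈ A, s x y :=
    sum_le_sum_of_subset_of_nonneg hBA fun y _ _ => hnn x y
  rw [pairwiseObjective_insert hsymm hx]
  nlinarith [mul_le_mul_of_nonneg_left hsum hβ, mul_nonneg hβ (hnn x x)]

theorem le_pairwiseObjective_insert (hsymm : ∀ v w, s v w = s w v) (hnn : ∀ v w, 0 ≤ s v w)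
    (hβ : 0 ≤ β) {A C : Finset V} {x : V} (hAC : insert x A ⊆ C) (hx : x ∉ A) :
    pairwiseObjective α β u s A + (α * u x - β * ∑ y ∈ C, s x y) ≤
      pairwiseObjective α β u s (insert x A) := by
  have hsum : s x x + ∑ y ∈ A, s x y ≤ ∑ y ∈ C, s x y := by
    rw [← sum_insert hx]
    exact sum_le_sum_of_subset_of_nonneg hAC fun y _ _ => hnn x y
  rw [pairwiseObjective_insert hsymm hx]
  nlinarith [mul_le_mul_of_nonneg_left hsum hβ, mul_nonneg hβ (hnn x x)]

theorem pairwiseObjective_insert_lt_insert (hα : 0 < α) (hβ : 0 ≤ β)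
    (hsymm : ∀ v w, s v w = s w v) (hnn : ∀ v w, 0 ≤ s v w) {A B C : Finset V} {v w : V}
    (hBA : B ⊆ A) (hwC : insert w A ⊆ C) (hv : v ∉ A) (hw : w ∉ A)
    (hlt : u v - β / α * ∑ y ∈ B, s v y < u w - β / α * ∑ y ∈ C, s w y) :
    pairwiseObjective α β u s (insert v A) < pairwiseObjective α β u s (insert w A) := by
  have hαU : ∀ x X, α * (u x - β / α * X) = α * u x - β * X := fun x X => by field_simp
  calc pairwiseObjective α β u s (insert v A)
      ≤ pairwiseObjective α β u s A + α * (u v - β / α * ∑ y ∈ B, s v y) := by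
        rw [hαU]; exact pairwiseObjective_insert_le hsymm hnn hβ hBA hv
    _ < pairwiseObjective α β u s A + α * (u w - β / α * ∑ y ∈ C, s w y) := by gcongr
    _ ≤ pairwiseObjective α β u s (insert w A) := by
        rw [hαU]; exact le_pairwiseObjective_insert hsymm hnn hβ hwC hw

end PairwiseObjective

theorem shrink_lemma_general {V : Type*} [DecidableEq V]
    (α β : ℝ) (hα : 0 < α) (hβ : 0 ≤ β)
    (u : V → ℝ) (s : V → V → ℝ)
    (hsymm : ∀ v w, s v w = s w v) (hnn : ∀ v w, 0 ≤ s v w)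
    (f : Finset V → ℝ)
    (hf : ∀ S : Finset V, f S = α * ∑ v ∈ S, u v - (β / 2) * ∑ v ∈ S, ∑ w ∈ S, s v w)
    (S' R : Finset V) (hdisj : Disjoint S' R)
    (k : ℕ) (hk2 : k ≤ R.card)
    (Umin Umax : V → ℝ)
    (hUmin : ∀ v, Umin v = u v - (β / α) * ∑ w ∈ S' ∪ R, s v w)
    (hUmax : ∀ v, Umax v = u v - (β / α) * ∑ w ∈ S', s v w)
    (v : V) (hv : v ∈ R)
    (hshrink : Umax v < kthLargest (R.val.map Umin) k) :
    ∀ Sstar : Finset V,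
      S' ⊆ Sstar → Sstar ⊆ S' ∪ R → Sstar.card = S'.card + k →
      (∀ T : Finset V, S' ⊆ T → T ⊆ S' ∪ R → T.card = S'.card + k → f T ≤ f Sstar) →
      v ∉ Sstar := by
  intro Sstar hS'S hSR hcard hopt hvS
  obtain rfl : f = pairwiseObjective α β u s := funext hf
  set K := kthLargest (R.val.map Umin) k
  have hvS' : v ∉ S' := disjoint_right.1 hdisj hv
  have hvW : v ∉ {w ∈ R | K ≤ Umin w} := by
    have hUminUmax : Umin v ≤ Umax v := by
      rw [hUmin, hUmax]
      gcongr
      exacts [fun y _ _ => hnn v y, subset_union_left]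
    simpa using fun _ => hshrink.trans_le' hUminUmax
  obtain ⟨w, hwW, hwS⟩ := exists_mem_notMem_of_card_sdiff_le
    (hdisj.symm.mono_left (filter_subset _ R)) (mem_sdiff.2 ⟨hvS, hvS'⟩) hvW
    (by rw [card_sdiff_of_subset hS'S, hcard, Nat.add_sub_cancel_left]
        exact le_card_filter_kthLargest R Umin hk2)
  obtain ⟨hwR, hKw⟩ := mem_filter.1 hwW
  set A := Sstar.erase v
  have hwA : w ∉ A := fun h => hwS (mem_of_mem_erase h)
  have hS'A : S' ⊆ A := fun x hx => mem_erase.2 ⟨ne_of_mem_of_not_mem hx hvS', hS'S hx⟩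
  have hwAR : insert w A ⊆ S' ∪ R :=
    insert_subset (mem_union_right _ hwR) ((erase_subset _ _).trans hSR)
  have hswap := pairwiseObjective_insert_lt_insert hα hβ hsymm hnn hS'A hwAR (notMem_erase v _) hwA
    (by rw [← hUmax, ← hUmin]; exact hshrink.trans_le hKw)
  rw [insert_erase hvS] at hswap
  refine (hopt (insert w A) (hS'A.trans (subset_insert _ _)) hwAR ?_).not_gt hswap
  rw [card_insert_of_notMem hwA, card_erase_of_mem hvS, hcard, Nat.sub_add_cancel]
  exact hcard ▸ card_pos.2 ⟨v, hvS⟩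

/-- Shrink step correctness: if the maximum utility of `v ∈ R` is below the `k`-th largest
minimum utility over `R`, then `v` belongs to no optimal set. -/
theorem shrink_lemma {V : Type*} [Fintype V] [DecidableEq V]
    (α β : ℝ) (hα : 0 < α) (hβ : 0 ≤ β)
    (u : V → ℝ) (s : V → V → ℝ)
    (hsymm : ∀ v w, s v w = s w v) (hnn : ∀ v w, 0 ≤ s v w)
    (hdiag : ∀ v, s v v = 0)
    (f : Finset V → ℝ)
    (hf : ∀ S : Finset V, f S = α * ∑ v ∈ S, u v - (β / 2) * ∑ v ∈ S, ∑ w ∈ S, s v w)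
    (S' R : Finset V) (hdisj : Disjoint S' R)
    (k : ℕ) (hk1 : 1 ≤ k) (hk2 : k ≤ R.card)
    (Umin Umax : V → ℝ)
    (hUmin : ∀ v, Umin v = u v - (β / α) * ∑ w ∈ S' ∪ R, s v w)
    (hUmax : ∀ v, Umax v = u v - (β / α) * ∑ w ∈ S', s v w)
    (v : V) (hv : v ∈ R)
    (hshrink : Umax v < kthLargest (R.val.map Umin) k) :
    ∀ Sstar : Finset V,
      S' ⊆ Sstar → Sstar ⊆ S' ∪ R → Sstar.card = S'.card + k →
      (∀ T : Finset V, S' ⊆ T → T ⊆ S' ∪ R → T.card = S'.card + k → f T ≤ f Sstar) →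
      v ∉ Sstar :=
  shrink_lemma_general α β hα hβ u s hsymm hnn f hf S' R hdisj k hk2 Umin Umax hUmin hUmax v hv
    hshrink
end

section
/- Let r ≥ 1 be a real number and suppose that for every v ∈ V we have 0 < U_min(v) and U_min(v) ≤ Ũ_min(v) ≤ r · U_min(v). Then the surrogate objective f̂ sandwiches f: for every S ⊆ V, f(S) ≤ f̂(S) ≤ r · f(S). -/
open Finset

/-- If the approximate minimum utilities `Ũ_min` satisfy
`U_min(v) ≤ Ũ_min(v) ≤ r · U_min(v)` with `0 < U_min(v)`, then the surrogate objective `f̂`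
sandwiches the true objective: `f(S) ≤ f̂(S) ≤ r · f(S)` for every `S ⊆ V`. -/
theorem surrogate_sandwich {V : Type*} [Fintype V] [DecidableEq V]
    (α β : ℝ) (hα : 0 < α) (hβ : 0 ≤ β)
    (u : V → ℝ) (s : V → V → ℝ)
    (hsymm : ∀ v w, s v w = s w v) (hnn : ∀ v w, 0 ≤ s v w)
    (hdiag : ∀ v, s v v = 0)
    (f : Finset V → ℝ)
    (hf : ∀ S : Finset V, f S = α * ∑ v ∈ S, u v - (β / 2) * ∑ v ∈ S, ∑ w ∈ S, s v w)
    (Sv : V → ℝ) (hSv : ∀ v, Sv v = ∑ w, s v w)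
    (Umin : V → ℝ) (hUmin : ∀ v, Umin v = u v - (β / α) * Sv v)
    (ut : V → Finset V → ℝ)
    (hut : ∀ v (S : Finset V), ut v S = α * u v - (β / 2) * ∑ w ∈ S, s v w)
    (Utmin : V → ℝ)
    (fhat : Finset V → ℝ)
    (hfhat : ∀ S : Finset V, fhat S = ∑ v ∈ S, max (ut v S) (α * Utmin v))
    (r : ℝ) (hr : 1 ≤ r)
    (hpos : ∀ v, 0 < Umin v)
    (hlow : ∀ v, Umin v ≤ Utmin v) (hhigh : ∀ v, Utmin v ≤ r * Umin v) :
    ∀ S : Finset V, f S ≤ fhat S ∧ fhat S ≤ r * f S := by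
  have key : ∀ v (S : Finset V), α * Umin v ≤ ut v S := by
    intro v S
    have h1 : ∑ w ∈ S, s v w ≤ ∑ w, s v w :=
      Finset.sum_le_sum_of_subset_of_nonneg (Finset.subset_univ S)
        (fun w _ _ => hnn v w)
    have hs : (0:ℝ) ≤ ∑ w, s v w := Finset.sum_nonneg fun w _ => hnn v w
    have hαβ : α * (β / α * Sv v) = β * Sv v := by field_simp
    rw [hut, hUmin]
    rw [hSv] at hαβ ⊢
    nlinarith
  intro S
  have hfeq : f S = ∑ v ∈ S, ut v S := by
    rw [hf, Finset.mul_sum, Finset.mul_sum, ← Finset.sum_sub_distrib]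
    exact Finset.sum_congr rfl fun v _ => (hut v S).symm
  constructor
  · rw [hfeq, hfhat]
    exact Finset.sum_le_sum fun v _ => le_max_left _ _
  · rw [hfeq, hfhat, Finset.mul_sum]
    refine Finset.sum_le_sum fun v hv => ?_
    have hk := key v S
    have hp := hpos v
    have hh := hhigh v
    have h0 : 0 < α * Umin v := mul_pos hα hp
    apply max_le
    · nlinarith
    · nlinarith
end

section
/- Fix v ∈ V, let γ ≥ 1 and p ∈ [0,1] be reals, and suppose u(v) > 0, U_min(v) > 0, and u(v) ≤ γ · U_min(v). Let T_v be a real number with p² · S_v ≤ T_v ≤ S_v and set Ũ_min(v) = u(v) − (β/α) · T_v. Then U_min(v) ≤ Ũ_min(v) ≤ (1 + γ·(1 − p²)) · U_min(v). -/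
open Finset

/-- Pointwise bound on the approximate minimum utility computed from a sampled neighbor sum
`T_v` with `p²·S_v ≤ T_v ≤ S_v`, given that the max/min utility ratio is at most `γ`. -/
theorem approx_min_utility_bound {V : Type*} [Fintype V] [DecidableEq V]
    (α β : ℝ) (hα : 0 < α) (hβ : 0 ≤ β)
    (u : V → ℝ) (s : V → V → ℝ)
    (hsymm : ∀ v w, s v w = s w v) (hnn : ∀ v w, 0 ≤ s v w)
    (hdiag : ∀ v, s v v = 0)
    (Sv : V → ℝ) (hSv : ∀ v, Sv v = ∑ w, s v w)
    (Umin : V → ℝ) (hUmin : ∀ v, Umin v = u v - (β / α) * Sv v)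
    (v : V) (γ p : ℝ) (hγ : 1 ≤ γ) (hp0 : 0 ≤ p) (hp1 : p ≤ 1)
    (hu : 0 < u v) (hUminpos : 0 < Umin v) (hratio : u v ≤ γ * Umin v)
    (Tv : ℝ) (hTv1 : p ^ 2 * Sv v ≤ Tv) (hTv2 : Tv ≤ Sv v)
    (Utmin : ℝ) (hUt : Utmin = u v - (β / α) * Tv) :
    Umin v ≤ Utmin ∧ Utmin ≤ (1 + γ * (1 - p ^ 2)) * Umin v := by
  have hc : 0 ≤ β / α := div_nonneg hβ hα.le
  have hU := hUmin v
  have hp2 : p ^ 2 ≤ 1 := by nlinarith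
  constructor
  · rw [hU, hUt]
    nlinarith
  · rw [hUt]
    nlinarith [mul_nonneg hc (sub_nonneg.2 hTv1), mul_nonneg (sub_nonneg.2 hp2) (sub_nonneg.2 hratio)]
end

section
/- Let γ ≥ 1, p ∈ [0,1], and set r = 1 + γ·(1 − p²); let k ≥ 1 be an integer with k ≤ |V|. Suppose that for every v ∈ V: u(v) > 0, U_min(v) > 0, u(v) ≤ γ · U_min(v), and Ũ_min(v) = u(v) − (β/α) · T_v for some real T_v with p²·S_v ≤ T_v ≤ S_v. If S ⊆ V with |S| = k satisfies f̂(S) ≥ (1/2) · f̂(T) for every T ⊆ V with |T| = k, then f(S) ≥ (1/(2r)) · f(T) for every T ⊆ V with |T| = k; in particular f(S) ≥ (1/(2r)) · f(S*) for any size-k maximizer S* of f. -/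
/-!
Both objectives are sums of per-element terms over `S`: `f(S) = Σ_{v ∈ S} ũ(v,S)` and
`f̂(S) = Σ_{v ∈ S} max(ũ(v,S), α Ũ_min(v))`. Since `α U_min(v) ≤ ũ(v,S)`, each term of `f̂`
dominates that of `f`, so `f ≤ f̂`. Conversely `α Ũ_min(v) ≤ (1 - p²) α u(v) + p² α U_min(v)`,
and `u(v) ≤ γ U_min(v)` turns this into at most `r · ũ(v,S)`, so `f̂(S) ≤ r f(S)`. Hence
`f(S) ≥ f̂(S)/r ≥ f̂(T)/(2r) ≥ f(T)/(2r)`.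
-/

open Finset

theorem mul_sum_sub_mul_sum_sum_eq_sum {V R : Type*} [CommRing R] (S : Finset V)
    (a c : R) (u : V → R) (s : V → V → R) :
    a * ∑ v ∈ S, u v - c * ∑ v ∈ S, ∑ w ∈ S, s v w = ∑ v ∈ S, (a * u v - c * ∑ w ∈ S, s v w) := by
  rw [mul_sum, mul_sum, sum_sub_distrib]

theorem half_mul_sum_le_mul_sum_univ {V : Type*} [Fintype V] {β : ℝ} (hβ : 0 ≤ β)
    {s : V → ℝ} (hs : ∀ w, 0 ≤ s w) (S : Finset V) :
    β / 2 * ∑ w ∈ S, s w ≤ β * ∑ w, s w := by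
  have h_sub : ∑ w ∈ S, s w ≤ ∑ w, s w := sum_le_univ_sum_of_nonneg hs
  have h_nonneg : 0 ≤ ∑ w ∈ S, s w := sum_nonneg fun w _ ↦ hs w
  nlinarith

/-- Here `x`, `m`, `a`, `t` stand for `ũ(v,S)`, `α U_min(v)`, `α u(v)`, `α Ũ_min(v)` and `q`
for `p²`. -/
theorem max_le_one_add_mul_one_sub_mul {x t a m γ q : ℝ} (hm : 0 ≤ m) (hmx : m ≤ x)
    (ha : a ≤ γ * m) (hγ : 0 ≤ γ) (hq : q ≤ 1) (ht : t ≤ a - q * (a - m)) :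
    max x t ≤ (1 + γ * (1 - q)) * x := by
  have hq' : 0 ≤ 1 - q := sub_nonneg.mpr hq
  refine max_le ?_ ?_
  · nlinarith [mul_nonneg hγ hq']
  · nlinarith [mul_le_mul_of_nonneg_left ha hq',
      mul_nonneg (mul_nonneg hγ hq') (sub_nonneg.mpr hmx)]

theorem div_mul_le_of_surrogate {ι : Type*} {f g : ι → ℝ} {S T : ι} {c r : ℝ} (hr : 0 < r)
    (hc : 0 ≤ c) (hfg : f T ≤ g T) (hgS : g S ≤ r * f S) (happrox : c * g T ≤ g S) :
    c / r * f T ≤ f S := by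
  rw [div_mul_eq_mul_div, div_le_iff₀ hr]
  nlinarith [mul_le_mul_of_nonneg_left hfg hc]

theorem approximate_bounding_guarantee_general {V : Type*} [Fintype V]
    (α β : ℝ) (hα : 0 < α) (hβ : 0 ≤ β)
    (u : V → ℝ) (s : V → V → ℝ)
    (hnn : ∀ v w, 0 ≤ s v w)
    (f : Finset V → ℝ)
    (hf : ∀ S : Finset V, f S = α * ∑ v ∈ S, u v - (β / 2) * ∑ v ∈ S, ∑ w ∈ S, s v w)
    (Sv : V → ℝ) (hSv : ∀ v, Sv v = ∑ w, s v w)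
    (Umin : V → ℝ) (hUmin : ∀ v, Umin v = u v - (β / α) * Sv v)
    (γ p r : ℝ) (hγ : 1 ≤ γ) (hp0 : 0 ≤ p) (hp1 : p ≤ 1)
    (hr : r = 1 + γ * (1 - p ^ 2))
    (k : ℕ)
    (hUminpos : ∀ v, 0 < Umin v)
    (hratio : ∀ v, u v ≤ γ * Umin v)
    (T : V → ℝ) (hT : ∀ v, p ^ 2 * Sv v ≤ T v ∧ T v ≤ Sv v)
    (Utmin : V → ℝ) (hUt : ∀ v, Utmin v = u v - (β / α) * T v)
    (ut : V → Finset V → ℝ)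
    (hut : ∀ v (S : Finset V), ut v S = α * u v - (β / 2) * ∑ w ∈ S, s v w)
    (fhat : Finset V → ℝ)
    (hfhat : ∀ S : Finset V, fhat S = ∑ v ∈ S, max (ut v S) (α * Utmin v))
    (S : Finset V)
    (happrox : ∀ T' : Finset V, T'.card = k → fhat S ≥ (1 / 2) * fhat T') :
    (∀ T' : Finset V, T'.card = k → f S ≥ (1 / (2 * r)) * f T') ∧
      (∀ Sstar : Finset V, Sstar.card = k →
        (∀ T' : Finset V, T'.card = k → f T' ≤ f Sstar) →
        f S ≥ (1 / (2 * r)) * f Sstar) := by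
  have hq : p ^ 2 ≤ 1 := pow_le_one₀ hp0 hp1
  have hr_pos : 0 < r := by nlinarith
  have hf_sum : ∀ S', f S' = ∑ v ∈ S', ut v S' := fun S' ↦ by
    simp only [hf, hut, mul_sum_sub_mul_sum_sum_eq_sum]
  have hαUmin : ∀ v, α * Umin v = α * u v - β * Sv v := fun v ↦ by rw [hUmin]; field_simp
  have hαUtmin : ∀ v, α * Utmin v = α * u v - β * T v := fun v ↦ by rw [hUt]; field_simp
  have hUmin_le_ut : ∀ S' v, α * Umin v ≤ ut v S' := fun S' v ↦ by
    rw [hαUmin, hut, hSv]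
    linarith [half_mul_sum_le_mul_sum_univ hβ (hnn v) S']
  have hf_le_fhat : ∀ S', f S' ≤ fhat S' := fun S' ↦ by
    rw [hf_sum, hfhat]
    exact sum_le_sum fun v _ ↦ le_max_left _ _
  have hfhat_le : fhat S ≤ r * f S := by
    rw [hfhat, hf_sum, mul_sum, hr]
    refine sum_le_sum fun v _ ↦ max_le_one_add_mul_one_sub_mul (a := α * u v)
      (mul_pos hα (hUminpos v)).le (hUmin_le_ut S v) ?_ (by linarith) hq ?_
    · nlinarith [hratio v]
    · rw [hαUtmin, hαUmin, sub_sub_cancel]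
      nlinarith [(hT v).1]
  have hmain : ∀ T', T'.card = k → f S ≥ (1 / (2 * r)) * f T' := fun T' hT' ↦ by
    rw [ge_iff_le, ← div_div]
    exact div_mul_le_of_surrogate hr_pos (by norm_num) (hf_le_fhat T') hfhat_le (happrox T' hT')
  exact ⟨hmain, fun Sstar hcard _ ↦ hmain Sstar hcard⟩

/-- Deterministic core of the approximate-bounding guarantee: if every sampled neighbor sum
`T_v` satisfies `p²·S_v ≤ T_v ≤ S_v`, the max/min utility ratio is at most `γ`, and a size-`k`
set `S` achieves a `1/2`-approximation for the surrogate objective `f̂`, then `S` achieves a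
`1/(2r)`-approximation for `f` with `r = 1 + γ(1 - p²)`; in particular
`f(S) ≥ f(S*)/(2r)` for any size-`k` maximizer `S*` of `f`. -/
theorem approximate_bounding_guarantee {V : Type*} [Fintype V] [DecidableEq V]
    (α β : ℝ) (hα : 0 < α) (hβ : 0 ≤ β)
    (u : V → ℝ) (s : V → V → ℝ)
    (hsymm : ∀ v w, s v w = s w v) (hnn : ∀ v w, 0 ≤ s v w)
    (hdiag : ∀ v, s v v = 0)
    (f : Finset V → ℝ)
    (hf : ∀ S : Finset V, f S = α * ∑ v ∈ S, u v - (β / 2) * ∑ v ∈ S, ∑ w ∈ S, s v w)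
    (Sv : V → ℝ) (hSv : ∀ v, Sv v = ∑ w, s v w)
    (Umin : V → ℝ) (hUmin : ∀ v, Umin v = u v - (β / α) * Sv v)
    (γ p r : ℝ) (hγ : 1 ≤ γ) (hp0 : 0 ≤ p) (hp1 : p ≤ 1)
    (hr : r = 1 + γ * (1 - p ^ 2))
    (k : ℕ) (hk1 : 1 ≤ k) (hk2 : k ≤ Fintype.card V)
    (hu : ∀ v, 0 < u v) (hUminpos : ∀ v, 0 < Umin v)
    (hratio : ∀ v, u v ≤ γ * Umin v)
    (T : V → ℝ) (hT : ∀ v, p ^ 2 * Sv v ≤ T v ∧ T v ≤ Sv v)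
    (Utmin : V → ℝ) (hUt : ∀ v, Utmin v = u v - (β / α) * T v)
    (ut : V → Finset V → ℝ)
    (hut : ∀ v (S : Finset V), ut v S = α * u v - (β / 2) * ∑ w ∈ S, s v w)
    (fhat : Finset V → ℝ)
    (hfhat : ∀ S : Finset V, fhat S = ∑ v ∈ S, max (ut v S) (α * Utmin v))
    (S : Finset V) (hScard : S.card = k)
    (happrox : ∀ T' : Finset V, T'.card = k → fhat S ≥ (1 / 2) * fhat T') :
    (∀ T' : Finset V, T'.card = k → f S ≥ (1 / (2 * r)) * f T') ∧
      (∀ Sstar : Finset V, Sstar.card = k →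
        (∀ T' : Finset V, T'.card = k → f T' ≤ f Sstar) →
        f S ≥ (1 / (2 * r)) * f Sstar) :=
  approximate_bounding_guarantee_general α β hα hβ u s hnn f hf Sv hSv Umin hUmin γ p r hγ hp0 hp1
    hr k hUminpos hratio T hT Utmin hUt ut hut fhat hfhat S happrox
end
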